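/- arXiv:1103.2076 — 4 statements merged into one kernel-verified Lean document; each statement's English description precedes it below -/
import Mathlib

section
/- The matrix B = [[2cos(π/n), 1],[-1, 0]] satisfies B^n = -Id (so B has order n in PSL₂(ℝ)). -/
open Polynomial Polynomial.Chebyshev Real

/-! The powers of `!![x, 1; -1, 0]` are given by the Vieta–Fibonacci (rescaled Chebyshev)
polynomials `S`, since the matrix satisfies `M² = x M - 1`, the recursion of `S`. At
`x = 2 cos θ` these evaluate to `S k (2 cos θ) = sin ((k + 1) θ) / sin θ`, so for `n θ = π`
the entries of `Mⁿ` are `sin (π + θ) / sin θ = -1`, `sin π / sin θ = 0` and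
`sin (π - θ) / sin θ = 1`. -/

theorem Matrix.pow_fin_two_eq_eval_chebyshev_S {R : Type*} [CommRing R] (x : R) (k : ℕ) :
    !![x, 1; -1, 0] ^ k =
      !![(S R k).eval x, (S R (k - 1)).eval x; -(S R (k - 1)).eval x, -(S R (k - 2)).eval x] := by
  induction k with
  | zero => simp [Matrix.one_fin_two]
  | succ m ih =>
    have h₁ := congrArg (eval x) (S_add_one R m)
    have h₂ := congrArg (eval x) (S_eq R m)
    simp only [eval_sub, eval_mul, eval_X] at h₁ h₂
    rw [pow_succ, ih, Matrix.mul_fin_two]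
    push_cast
    simp only [add_sub_cancel_right, show (m : ℤ) + 1 - 2 = m - 1 by ring]
    ext i j
    fin_cases i <;> fin_cases j <;>
      simp only [Fin.zero_eta, Fin.mk_one, Matrix.of_apply, Matrix.cons_val', Matrix.cons_val_zero,
        Matrix.cons_val_one, Matrix.empty_val', Matrix.cons_val_fin_one]
    · linear_combination -h₁
    · ring
    · linear_combination h₂
    · ring

theorem pow_two_mul_cos_eq_neg_one_of_mul_eq_pi {θ : ℝ} {n : ℕ} (hsin : sin θ ≠ 0)
    (hθ : n * θ = π) : !![2 * cos θ, 1; -1, 0] ^ n = -(1 : Matrix (Fin 2) (Fin 2) ℝ) := by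
  have hS (k : ℤ) (v : ℝ) (h : sin ((k + 1) * θ) = v * sin θ) : (S ℝ k).eval (2 * cos θ) = v :=
    mul_right_cancel₀ hsin ((S_two_mul_real_cos θ k).trans h)
  rw [Matrix.pow_fin_two_eq_eval_chebyshev_S, hS n (-1), hS (n - 1) 0, hS (n - 2) 1]
  · simp [Matrix.one_fin_two]
  · rw [show ((((n : ℤ) - 2 : ℤ) : ℝ) + 1) * θ = π - θ by push_cast; linarith, sin_pi_sub, one_mul]
  · rw [show ((((n : ℤ) - 1 : ℤ) : ℝ) + 1) * θ = π by push_cast; linarith, sin_pi, zero_mul]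
  · rw [show (((n : ℤ) : ℝ) + 1) * θ = θ + π by push_cast; linarith, sin_add_pi, neg_one_mul]

theorem stmt_4 (n : ℕ) (hn : 4 ≤ n)
    (B : Matrix (Fin 2) (Fin 2) ℝ)
    (hB : B = !![2 * Real.cos (Real.pi / n), 1; -1, 0]) :
    B ^ n = -(1 : Matrix (Fin 2) (Fin 2) ℝ) := by
  have hn1 : (1 : ℝ) < n := by exact_mod_cast (by omega : 1 < n)
  have hsin : sin (π / n) ≠ 0 :=
    (sin_pos_of_pos_of_lt_pi (by positivity) (div_lt_self pi_pos hn1)).ne'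
  rw [hB]
  exact pow_two_mul_cos_eq_neg_one_of_mul_eq_pi hsin (mul_div_cancel₀ π (by positivity))
end

section
/- With τ = 1 + 2cos(π/n), the matrix W = A⁻¹B⁻²A⁻¹B⁻¹ equals [[τ²+1, τ³],[-τ, -τ²+1]]; in particular W is parabolic (trace 2, determinant 1) and its Möbius action fixes -τ. -/
/-- Möbius action of a 2×2 real matrix on a real number. -/
noncomputable def moebius (M : Matrix (Fin 2) (Fin 2) ℝ) (x : ℝ) : ℝ :=
  (M 0 0 * x + M 0 1) / (M 1 0 * x + M 1 1)

/-! Both `A` and `B` have determinant one, so their inverses are their adjugates. Replacing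
`2 cos (π / n)` by `τ - 1` makes `W` a product of matrices polynomial in `τ`, an identity valid over
any commutative ring. At `x = -τ` the denominator of the Möbius map is `τ² - τ² + 1 = 1`. -/

open Matrix

theorem Matrix.inv_fin_two_of_det_eq_one {R : Type*} [CommRing R] {a b c d : R}
    (h : a * d - b * c = 1) : (!![a, b; c, d])⁻¹ = !![d, -b; -c, a] := by
  rw [inv_def, det_fin_two_of, h, Ring.inverse_one, one_smul, adjugate_fin_two_of]

theorem moebius_of (a b c d x : ℝ) :
    moebius !![a, b; c, d] x = (a * x + b) / (c * x + d) := rfl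

theorem inv_word_eq_parabolic {R : Type*} [CommRing R] (τ : R) :
    (!![1, τ; 0, 1])⁻¹ * ((!![τ - 1, 1; -1, 0])⁻¹ * (!![τ - 1, 1; -1, 0])⁻¹) *
        (!![1, τ; 0, 1])⁻¹ * (!![τ - 1, 1; -1, 0])⁻¹ =
      !![τ ^ 2 + 1, τ ^ 3; -τ, -τ ^ 2 + 1] := by
  rw [inv_fin_two_of_det_eq_one (by ring), inv_fin_two_of_det_eq_one (by ring)]
  simp only [mul_fin_two]
  ring_nf

theorem stmt_5_general (n : ℕ) (τ : ℝ) (hτ : τ = 1 + 2 * Real.cos (Real.pi / n))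
    (A B W : Matrix (Fin 2) (Fin 2) ℝ)
    (hA : A = !![1, τ; 0, 1])
    (hB : B = !![2 * Real.cos (Real.pi / n), 1; -1, 0])
    (hW : W = A⁻¹ * (B⁻¹ * B⁻¹) * A⁻¹ * B⁻¹) :
    W = !![τ ^ 2 + 1, τ ^ 3; -τ, -τ ^ 2 + 1] ∧
      Matrix.trace W = 2 ∧ Matrix.det W = 1 ∧ moebius W (-τ) = -τ := by
  have hc : 2 * Real.cos (Real.pi / n) = τ - 1 := by rw [hτ]; ring
  rw [hc] at hB
  subst hA hB hW
  rw [inv_word_eq_parabolic, trace_fin_two_of, det_fin_two_of, moebius_of]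
  refine ⟨rfl, by ring, by ring, ?_⟩
  rw [show -τ * -τ + (-τ ^ 2 + 1) = 1 by ring, div_one]
  ring

theorem stmt_5 (n : ℕ) (hn : 4 ≤ n) (τ : ℝ) (hτ : τ = 1 + 2 * Real.cos (Real.pi / n))
    (A B W : Matrix (Fin 2) (Fin 2) ℝ)
    (hA : A = !![1, τ; 0, 1])
    (hB : B = !![2 * Real.cos (Real.pi / n), 1; -1, 0])
    (hW : W = A⁻¹ * (B⁻¹ * B⁻¹) * A⁻¹ * B⁻¹) :
    W = !![τ ^ 2 + 1, τ ^ 3; -τ, -τ ^ 2 + 1] ∧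
      Matrix.trace W = 2 ∧ Matrix.det W = 1 ∧ moebius W (-τ) = -τ :=
  stmt_5_general n τ hτ A B W hA hB hW
end

section
/- For n = 2m+3 with m ≥ 1 (so n ≥ 5 odd), writing τ = 1 + 2cos(π/n) and B = [[2cos(π/n),1],[-1,0]], the Möbius action satisfies B^m·(1 - τ) = -1. Equivalently, (-2cos(π/n)·sin((m+1)π/n) + sin(mπ/n)) / (2cos(π/n)·sin(mπ/n) - sin((m-1)π/n)) = -1. -/
open Real

lemma moebius_smul (M : Matrix (Fin 2) (Fin 2) ℝ) {a : ℝ} (ha : a ≠ 0) (x : ℝ) :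
    moebius (a • M) x = moebius M x := by
  simp only [moebius, Matrix.smul_apply, smul_eq_mul, mul_assoc, ← mul_add]
  exact mul_div_mul_left _ _ ha

lemma two_mul_cos_mul_sin_sub_sin (θ t : ℝ) :
    2 * cos θ * sin (t * θ) - sin ((t - 1) * θ) = sin ((t + 1) * θ) := by
  rw [sub_one_mul, add_one_mul, sin_sub, sin_add]
  ring

lemma sin_smul_pow (θ : ℝ) (k : ℕ) :
    sin θ • !![2 * cos θ, 1; -1, 0] ^ k =
      !![sin ((k + 1) * θ), sin (k * θ); -sin (k * θ), -sin ((k - 1) * θ)] := by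
  induction k with
  | zero => ext i j; fin_cases i <;> fin_cases j <;> simp
  | succ k ih =>
    have h₁ := two_mul_cos_mul_sin_sub_sin θ (k + 1)
    have h₂ := two_mul_cos_mul_sin_sub_sin θ k
    rw [add_sub_cancel_right] at h₁
    rw [pow_succ, ← smul_mul_assoc, ih, Matrix.mul_fin_two]
    push_cast
    rw [add_sub_cancel_right, ← h₁, ← h₂]
    ext i j; fin_cases i <;> fin_cases j <;> simp <;> ring

lemma neg_two_cos_mul_sin_add_sin_div (θ t : ℝ) :
    (-(2 * cos θ) * sin ((t + 1) * θ) + sin (t * θ)) /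
        (2 * cos θ * sin (t * θ) - sin ((t - 1) * θ)) =
      -sin ((t + 2) * θ) / sin ((t + 1) * θ) := by
  have h := two_mul_cos_mul_sin_sub_sin θ (t + 1)
  rw [add_sub_cancel_right, add_assoc, one_add_one_eq_two] at h
  rw [two_mul_cos_mul_sin_sub_sin, ← h]
  ring

lemma moebius_pow_neg_two_cos {θ : ℝ} (hθ : sin θ ≠ 0) (k : ℕ) :
    moebius (!![2 * cos θ, 1; -1, 0] ^ k) (-(2 * cos θ)) =
      -sin ((k + 2) * θ) / sin ((k + 1) * θ) := by
  rw [← moebius_smul _ hθ, sin_smul_pow, ← neg_two_cos_mul_sin_add_sin_div]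
  simp only [moebius, Matrix.of_apply, Matrix.cons_val', Matrix.cons_val_zero, Matrix.cons_val_one,
    Matrix.empty_val', Matrix.cons_val_fin_one]
  ring_nf

lemma neg_sin_div_sin_pi_div_two_mul_add_three (m : ℕ) :
    -sin ((m + 2) * (π / (2 * m + 3))) / sin ((m + 1) * (π / (2 * m + 3))) = -1 := by
  have hsupp : (m + 2) * (π / (2 * m + 3)) = π - (m + 1) * (π / (2 * m + 3)) := by
    field_simp
    ring
  have hpos : 0 < sin ((m + 1) * (π / (2 * m + 3))) := by
    apply sin_pos_of_pos_of_lt_pi (by positivity)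
    rw [← mul_div_assoc, div_lt_iff₀ (by positivity)]
    nlinarith [pi_pos]
  rw [hsupp, sin_pi_sub, neg_div, div_self hpos.ne']

theorem stmt_10_general (m : ℕ) (n : ℕ) (hn : n = 2 * m + 3)
    (τ : ℝ) (hτ : τ = 1 + 2 * Real.cos (Real.pi / n))
    (B : Matrix (Fin 2) (Fin 2) ℝ)
    (hB : B = !![2 * Real.cos (Real.pi / n), 1; -1, 0]) :
    moebius (B ^ m) (1 - τ) = -1 ∧
    (-(2 * Real.cos (Real.pi / n)) * Real.sin ((m + 1) * Real.pi / n)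
        + Real.sin (m * Real.pi / n)) /
      (2 * Real.cos (Real.pi / n) * Real.sin (m * Real.pi / n)
        - Real.sin ((m - 1 : ℝ) * Real.pi / n)) = -1 := by
  have hn' : (n : ℝ) = 2 * m + 3 := by exact_mod_cast hn
  subst hτ hB
  rw [hn']
  have hθ : sin (π / (2 * m + 3)) ≠ 0 := by
    refine (sin_pos_of_pos_of_lt_pi (by positivity) (div_lt_self pi_pos ?_)).ne'
    linarith [m.cast_nonneg (α := ℝ)]
  constructor
  · rw [show 1 - (1 + 2 * cos (π / (2 * m + 3))) = -(2 * cos (π / (2 * m + 3))) by ring,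
      moebius_pow_neg_two_cos hθ, neg_sin_div_sin_pi_div_two_mul_add_three]
  · simp only [mul_div_assoc]
    rw [neg_two_cos_mul_sin_add_sin_div, neg_sin_div_sin_pi_div_two_mul_add_three]

theorem stmt_10 (m : ℕ) (hm : 1 ≤ m) (n : ℕ) (hn : n = 2 * m + 3)
    (τ : ℝ) (hτ : τ = 1 + 2 * Real.cos (Real.pi / n))
    (B : Matrix (Fin 2) (Fin 2) ℝ)
    (hB : B = !![2 * Real.cos (Real.pi / n), 1; -1, 0]) :
    moebius (B ^ m) (1 - τ) = -1 ∧
    (-(2 * Real.cos (Real.pi / n)) * Real.sin ((m + 1) * Real.pi / n)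
        + Real.sin (m * Real.pi / n)) /
      (2 * Real.cos (Real.pi / n) * Real.sin (m * Real.pi / n)
        - Real.sin ((m - 1 : ℝ) * Real.pi / n)) = -1 :=
  stmt_10_general m n hn τ hτ B hB
end

section
/- For n = 2m+3 odd, n ≥ 5, B^(n-2)·(-τ) = -1/τ, where B = [[2cos(π/n),1],[-1,0]] acts by Möbius transformations and τ = 1 + 2cos(π/n). (Indeed B^(n-2) acts as B⁻² projectively and B⁻² = [[-1, 1-τ],[τ-1, (1-τ)²-1]] up to sign.) -/
open Polynomial Polynomial.Chebyshev Real

theorem matrix_pow_eq_chebyshevU {R : Type*} [CommRing R] (c : R) (k : ℕ) :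
    !![2 * c, 1; -1, 0] ^ k =
      !![(U R k).eval c, (U R (k - 1)).eval c;
        -(U R (k - 1)).eval c, -(U R (k - 2)).eval c] := by
  induction k with
  | zero => simp [Matrix.one_fin_two, U_neg_two]
  | succ k ih =>
    have hk := U_add_one R ((k : ℤ) - 1)
    rw [sub_add_cancel, sub_sub, one_add_one_eq_two] at hk
    rw [pow_succ, ih, Matrix.mul_fin_two, Nat.cast_succ, add_sub_cancel_right,
      show (k : ℤ) + 1 - 2 = k - 1 by ring, U_add_one, hk]
    ext i j
    fin_cases i <;> fin_cases j <;> simp <;> ring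

theorem chebyshevU_eval_cos_pi_div_reflect (n : ℕ) (hn : 2 ≤ n) (j : ℤ) :
    (U ℝ (n - 2 - j)).eval (cos (π / n)) = (U ℝ j).eval (cos (π / n)) := by
  have hsin : sin (π / n) ≠ 0 := by
    have : (1 : ℝ) < n := by exact_mod_cast hn
    exact (sin_pos_of_pos_of_lt_pi (by positivity) (div_lt_self pi_pos this)).ne'
  refine mul_right_cancel₀ hsin ?_
  have hn0 : (n : ℝ) ≠ 0 := by positivity
  rw [U_real_cos, U_real_cos, ← sin_pi_sub]
  congr 1
  push_cast
  field_simp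
  ring

theorem stmt_11_general (n : ℕ) (hn : 5 ≤ n)
    (τ : ℝ) (hτ : τ = 1 + 2 * Real.cos (Real.pi / n))
    (B : Matrix (Fin 2) (Fin 2) ℝ)
    (hB : B = !![2 * Real.cos (Real.pi / n), 1; -1, 0]) :
    moebius (B ^ (n - 2)) (-τ) = -1 / τ := by
  set c := cos (π / n)
  have reflect := chebyshevU_eval_cos_pi_div_reflect n (by omega)
  have h₀ : (U ℝ (n - 2)).eval c = 1 := by simpa using reflect 0
  have h₁ : (U ℝ (n - 2 - 1)).eval c = 2 * c := by simpa using reflect 1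
  have h₂ : (U ℝ (n - 2 - 2)).eval c = 4 * c ^ 2 - 1 := by simp [c, reflect, U_two]
  rw [hB, matrix_pow_eq_chebyshevU, Nat.cast_sub (by omega : 2 ≤ n), Nat.cast_ofNat]
  simp only [moebius, Matrix.of_apply, Matrix.cons_val', Matrix.cons_val_zero,
    Matrix.cons_val_one, Matrix.empty_val', Matrix.cons_val_fin_one, h₀, h₁, h₂, hτ]
  congr 1 <;> ring

theorem stmt_11 (n : ℕ) (hn : 5 ≤ n) (hodd : Odd n)
    (τ : ℝ) (hτ : τ = 1 + 2 * Real.cos (Real.pi / n))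
    (B : Matrix (Fin 2) (Fin 2) ℝ)
    (hB : B = !![2 * Real.cos (Real.pi / n), 1; -1, 0]) :
    moebius (B ^ (n - 2)) (-τ) = -1 / τ :=
  stmt_11_general n hn τ hτ B hB
end
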